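/- Low-frequency estimate in the proof of Theorem 2 (iii): Let γ > 0 and let f belong to the Besov-type space B^{1,∞}_{γ,α} on the Jacobi hypergroup. Then there is a constant c > 0 such that for all t > 0, ∫₀^{1/t} |𝓕(f)(x)| x dx/|c(x)|² ≤ c ( t^{(γ−3)−1} + t^{γ−2(α+1)−1} ). -/

import Mathlib

open MeasureTheory Set Filter

/-- The `L^p` norm on `(0,∞)` with respect to the weighted measure `w(x) dx`. -/
noncomputable def wLpNorm (w : ℝ → ℝ) (p : ℝ) (f : ℝ → ℂ) : ℝ :=
  (∫ x in Set.Ioi (0 : ℝ), ‖f x‖ ^ p * w x) ^ (1 / p)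

/-- Membership in `L^p((0,∞), w(x) dx)`. -/
def MemW (w : ℝ → ℝ) (p : ℝ) (f : ℝ → ℂ) : Prop :=
  AEMeasurable f (volume.restrict (Set.Ioi (0 : ℝ))) ∧
    IntegrableOn (fun x => ‖f x‖ ^ p * w x) (Set.Ioi (0 : ℝ))

/-- The Jacobi hypergroup setting: the Chébli–Trimèche hypergroup `(ℝ₊, ∗(A))` with
`A(x) = 2^(2ρ) (sinh x)^(2α+1) (cosh x)^(2β+1)`, `α ≥ β ≥ -1/2`, `α ≠ -1/2`,
`ρ = α + β + 1`.  Its characters are the Jacobi functions `φ_λ`, satisfying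
`|1 - φ_λ(t)| ≥ c₀ min{1, (λt)²}`.  The density `cden = |c(λ)|⁻²` is even, continuous
and comparable to `|λ|^(2α+1)` for `|λ| > k` and to `|λ|²` for `|λ| ≤ k`.  The
generalized Fourier transform `FT` is given on `L¹_A` by
`𝓕(f)(λ) = ∫₀^∞ f(x) φ_λ(x) A(x) dx`; it satisfies `‖𝓕 f‖_∞ ≤ ‖f‖_{A,1}`, the
Hausdorff–Young inequality, the Hardy–Littlewood inequality of Lemma 1 and the
translation identity `𝓕(τ_δ f)(λ) = φ_λ(δ) 𝓕(f)(λ)`, where the generalized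
translations `τ_δ` are `L^p_A`-contractions. -/
structure JacobiHypergroup where
  α : ℝ
  β : ℝ
  ρ : ℝ
  hβα : β ≤ α
  hβ : -(1/2) ≤ β
  hα : α ≠ -(1/2)
  hρ : ρ = α + β + 1
  /-- the weight function `A` of the Jacobi hypergroup -/
  A : ℝ → ℝ
  hA : ∀ x : ℝ, 0 ≤ x →
    A x = (2 : ℝ) ^ (2 * ρ) * Real.sinh x ^ (2 * α + 1) * Real.cosh x ^ (2 * β + 1)
  /-- the Jacobi functions `φ_λ`, the characters of the hypergroup -/
  φ : ℝ → ℝ → ℂ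
  c₀ : ℝ
  hc₀ : 0 < c₀
  hφ_lower : ∀ lam t : ℝ, 0 < t →
    c₀ * min 1 ((lam * t) ^ 2) ≤ ‖1 - φ lam t‖
  /-- the density `|c(λ)|⁻²` of the Plancherel measure -/
  cden : ℝ → ℝ
  hcden_cont : Continuous cden
  hcden_even : ∀ x : ℝ, cden (-x) = cden x
  k : ℝ
  k₁ : ℝ
  k₂ : ℝ
  hk : 0 < k
  hk₁ : 0 < k₁
  hk₂ : 0 < k₂
  hcden_hi : ∀ x : ℝ, k < |x| →
    k₁ * |x| ^ (2 * α + 1) ≤ cden x ∧ cden x ≤ k₂ * |x| ^ (2 * α + 1)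
  hcden_lo : ∀ x : ℝ, |x| ≤ k →
    k₁ * |x| ^ (2 : ℝ) ≤ cden x ∧ cden x ≤ k₂ * |x| ^ (2 : ℝ)
  /-- the generalized Fourier transform -/
  FT : (ℝ → ℂ) → ℝ → ℂ
  hFT_def : ∀ f : ℝ → ℂ, MemW A 1 f → ∀ lam : ℝ,
    FT f lam = ∫ x in Set.Ioi (0 : ℝ), f x * φ lam x * (A x : ℂ)
  hFT_meas : ∀ f : ℝ → ℂ, Measurable (FT f)
  hFT_sub : ∀ f g : ℝ → ℂ, ∀ lam : ℝ,
    FT (fun y => f y - g y) lam = FT f lam - FT g lam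
  /-- `‖𝓕 f‖_∞ ≤ ‖f‖_{A,1}` -/
  hFT_sup : ∀ f : ℝ → ℂ, MemW A 1 f → ∀ lam : ℝ,
    ‖FT f lam‖ ≤ wLpNorm A 1 f
  /-- the Hausdorff–Young inequality `‖𝓕 f‖_{c,p'} ≤ C ‖f‖_{A,p}` -/
  hHY : ∀ p p' : ℝ, 1 < p → p ≤ 2 → 1 / p + 1 / p' = 1 →
    ∃ C > (0 : ℝ), ∀ f : ℝ → ℂ, MemW A p f →
      (∫⁻ lam in Set.Ioi (0 : ℝ),
          ENNReal.ofReal (‖FT f lam‖ ^ p' * cden lam)) ^ (1 / p')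
        ≤ ENNReal.ofReal (C * wLpNorm A p f)
  /-- the Hardy–Littlewood inequality of Lemma 1 (with the piecewise weight
  `g(t) = t³` for `t ≤ k`, `g(t) = t^(2(α+1))` for `t > k`) -/
  hHL : ∀ p : ℝ, 1 < p → p ≤ 2 →
    ∃ C > (0 : ℝ), ∀ f : ℝ → ℂ, MemW A p f →
      ∫⁻ x in Set.Ioi (0 : ℝ),
          ENNReal.ofReal ((if x ≤ k then x ^ (3 : ℝ) else x ^ (2 * (α + 1))) ^ (p - 2) *
            ‖FT f x‖ ^ p * cden x)
        ≤ ENNReal.ofReal (C * wLpNorm A p f ^ p)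
  /-- the generalized translation operators -/
  τ : ℝ → (ℝ → ℂ) → ℝ → ℂ
  hτ_contract : ∀ p : ℝ, 1 ≤ p → ∀ (δ : ℝ) (f : ℝ → ℂ), MemW A p f →
    MemW A p (τ δ f) ∧ wLpNorm A p (τ δ f) ≤ wLpNorm A p f
  hτ_diff : ∀ p : ℝ, 1 ≤ p → ∀ (δ : ℝ) (f : ℝ → ℂ), MemW A p f →
    MemW A p (fun y => τ δ f y - f y)
  /-- the translation identity `𝓕(τ_δ f)(λ) = φ_λ(δ) 𝓕(f)(λ)` -/
  hτ_FT : ∀ p : ℝ, 1 ≤ p → p ≤ 2 → ∀ (δ : ℝ) (f : ℝ → ℂ), MemW A p f →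
    ∀ᵐ lam ∂(volume.restrict (Set.Ioi (0 : ℝ))),
      FT (τ δ f) lam = φ lam δ * FT f lam

/-- The modulus of continuity of first order, `ω_{A,p}(f)(δ) = ‖τ_δ f - f‖_{A,p}`. -/
noncomputable def JacobiHypergroup.omega (S : JacobiHypergroup) (p : ℝ)
    (f : ℝ → ℂ) (δ : ℝ) : ℝ :=
  wLpNorm S.A p (fun y => S.τ δ f y - f y)


/-! For `x < 1/t` the lower bound on `|1 - φ_x(t)|` and the translation identity give
`c₀ (xt)² ‖𝓕 f(x)‖ ≤ ‖𝓕(τ_t f - f)(x)‖ ≤ ω_{A,1}(f)(t) ≤ C t^γ`. Since `|c(x)|⁻² ≲ x² + x^(2α+1)`,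
the integrand is `≲ t^(γ-2) (x + x^(2α))`, whose integral over `(0, 1/t)` is
`≲ t^(γ-4) + t^(γ-2α-3)`. -/

theorem lintegral_Ioo_ofReal_rpow_add_rpow {b r s : ℝ} (hb : 0 < b) (hr : -1 < r) (hs : -1 < s) :
    ∫⁻ x in Ioo 0 b, ENNReal.ofReal (x ^ r + x ^ s) =
      ENNReal.ofReal (b ^ (r + 1) / (r + 1) + b ^ (s + 1) / (s + 1)) := by
  have hintegrable : ∀ {q : ℝ}, -1 < q → IntegrableOn (fun x : ℝ => x ^ q) (Ioo 0 b) :=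
    fun hq => (intervalIntegral.integrableOn_Ioo_rpow_iff hb).2 hq
  have hintegral : ∀ {q : ℝ}, -1 < q → ∫ x in Ioo 0 b, x ^ q = b ^ (q + 1) / (q + 1) := by
    intro q hq
    rw [← integral_Ioc_eq_integral_Ioo, ← intervalIntegral.integral_of_le hb.le,
      integral_rpow (Or.inl hq), Real.zero_rpow (by linarith), sub_zero]
  have hnonneg : 0 ≤ᵐ[volume.restrict (Ioo 0 b)] fun x : ℝ => x ^ r + x ^ s := by
    filter_upwards [ae_restrict_mem measurableSet_Ioo] with x hx
    positivity [hx.1]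
  have hsum : IntegrableOn (fun x : ℝ => x ^ r + x ^ s) (Ioo 0 b) :=
    (hintegrable hr).add (hintegrable hs)
  rw [← ofReal_integral_eq_lintegral_ofReal hsum hnonneg,
    integral_add (hintegrable hr) (hintegrable hs), hintegral hr, hintegral hs]

namespace JacobiHypergroup

variable (S : JacobiHypergroup)

theorem neg_half_lt_α : -(1 / 2) < S.α :=
  lt_of_le_of_ne (S.hβ.trans S.hβα) (Ne.symm S.hα)

theorem cden_nonneg (x : ℝ) : 0 ≤ S.cden x := by
  rcases le_or_gt |x| S.k with h | h
  · exact le_trans (by have := S.hk₁; positivity) (S.hcden_lo x h).1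
  · exact le_trans (by have := S.hk₁; positivity) (S.hcden_hi x h).1

theorem cden_le (x : ℝ) : S.cden x ≤ S.k₂ * (|x| ^ (2 : ℝ) + |x| ^ (2 * S.α + 1)) := by
  rcases le_or_gt |x| S.k with h | h
  · have := (S.hcden_lo x h).2
    linarith [mul_nonneg S.hk₂.le (Real.rpow_nonneg (abs_nonneg x) (2 * S.α + 1))]
  · have := (S.hcden_hi x h).2
    linarith [mul_nonneg S.hk₂.le (Real.rpow_nonneg (abs_nonneg x) (2 : ℝ))]

theorem norm_FT_translate_sub {p : ℝ} (hp₁ : 1 ≤ p) (hp₂ : p ≤ 2) {f : ℝ → ℂ}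
    (hf : MemW S.A p f) (δ : ℝ) :
    ∀ᵐ lam ∂volume.restrict (Ioi 0),
      ‖S.FT (fun y => S.τ δ f y - f y) lam‖ = ‖1 - S.φ lam δ‖ * ‖S.FT f lam‖ := by
  filter_upwards [S.hτ_FT p hp₁ hp₂ δ f hf] with lam hlam
  rw [S.hFT_sub, hlam, ← norm_mul, norm_sub_rev]
  congr 1
  ring

theorem min_one_sq_mul_norm_FT_le_omega {f : ℝ → ℂ} (hf : MemW S.A 1 f) {δ : ℝ}
    (hδ : 0 < δ) :
    ∀ᵐ lam ∂volume.restrict (Ioi 0),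
      S.c₀ * min 1 ((lam * δ) ^ 2) * ‖S.FT f lam‖ ≤ S.omega 1 f δ := by
  filter_upwards [S.norm_FT_translate_sub le_rfl one_le_two hf δ] with lam hlam
  calc S.c₀ * min 1 ((lam * δ) ^ 2) * ‖S.FT f lam‖
      ≤ ‖1 - S.φ lam δ‖ * ‖S.FT f lam‖ := by gcongr; exact S.hφ_lower lam δ hδ
    _ = ‖S.FT (fun y => S.τ δ f y - f y) lam‖ := hlam.symm
    _ ≤ wLpNorm S.A 1 (fun y => S.τ δ f y - f y) := S.hFT_sup _ (S.hτ_diff 1 le_rfl δ f hf) lam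
    _ = S.omega 1 f δ := rfl

theorem norm_FT_mul_cden_le {f : ℝ → ℂ} (hf : MemW S.A 1 f) {t B : ℝ} (ht : 0 < t)
    (hω : S.omega 1 f t ≤ B) :
    ∀ᵐ x ∂volume.restrict (Ioo 0 (1 / t)),
      ‖S.FT f x‖ * x * S.cden x ≤ S.k₂ / S.c₀ * B / t ^ 2 * (x ^ (1 : ℝ) + x ^ (2 * S.α)) := by
  have hlow := ae_restrict_of_ae_restrict_of_subset (s := Ioo 0 (1 / t)) Ioo_subset_Ioi_self
    (S.min_one_sq_mul_norm_FT_le_omega hf ht)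
  filter_upwards [hlow, ae_restrict_mem measurableSet_Ioo] with x hx ⟨hx₀, hx_lt⟩
  have hxt : x * t ≤ 1 := by rw [lt_div_iff₀ ht] at hx_lt; exact hx_lt.le
  rw [min_eq_right (by nlinarith [mul_pos hx₀ ht])] at hx
  have hF : ‖S.FT f x‖ ≤ B / (S.c₀ * (x * t) ^ 2) := by
    rw [le_div_iff₀ (by have := S.hc₀; positivity)]; linarith
  have hcden := S.cden_le x
  rw [abs_of_pos hx₀] at hcden
  have hpow : x ^ (2 * S.α + 1) = x ^ (2 * S.α) * x := by
    rw [Real.rpow_add hx₀, Real.rpow_one]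
  calc ‖S.FT f x‖ * x * S.cden x
      ≤ B / (S.c₀ * (x * t) ^ 2) * x * (S.k₂ * (x ^ (2 : ℝ) + x ^ (2 * S.α + 1))) := by
        have hB : 0 ≤ B := le_trans (by have := S.hc₀; positivity) (hx.trans hω)
        exact mul_le_mul (mul_le_mul_of_nonneg_right hF hx₀.le) hcden (S.cden_nonneg x)
          (by have := S.hc₀; positivity)
    _ = S.k₂ / S.c₀ * B / t ^ 2 * (x ^ (1 : ℝ) + x ^ (2 * S.α)) := by
        rw [hpow, Real.rpow_one, Real.rpow_two]
        have := S.hc₀.ne'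
        field_simp

end JacobiHypergroup

theorem theorem_two_iii_low_general (S : JacobiHypergroup) (γ : ℝ)
    (f : ℝ → ℂ) (hf : MemW S.A 1 f)
    (hBesov : ∃ C : ℝ, ∀ x > (0 : ℝ), S.omega 1 f x ≤ C * x ^ γ) :
    ∃ c > (0 : ℝ), ∀ t > (0 : ℝ),
      ∫⁻ x in Set.Ioo (0 : ℝ) (1 / t),
          ENNReal.ofReal (‖S.FT f x‖ * x * S.cden x)
        ≤ ENNReal.ofReal (c * (t ^ ((γ - 3) - 1) + t ^ (γ - 2 * (S.α + 1) - 1))) := by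
  obtain ⟨C, hC⟩ := hBesov
  have hα : 0 < 2 * S.α + 1 := by linarith [S.neg_half_lt_α]
  set K := S.k₂ / S.c₀ * max C 1
  have hK : 0 < K := by have := S.hk₂; have := S.hc₀; positivity
  refine ⟨K * (1 / 2 + 1 / (2 * S.α + 1)), by positivity, fun t ht => ?_⟩
  have hω : S.omega 1 f t ≤ max C 1 * t ^ γ :=
    (hC t ht).trans (by gcongr; exact le_max_left C 1)
  have hscale : ∀ s : ℝ, K * t ^ γ / t ^ 2 * (1 / t) ^ s = K * t ^ (γ - 2 - s) := by
    intro s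
    rw [Real.rpow_sub ht, Real.rpow_sub ht, Real.div_rpow zero_le_one ht.le, Real.one_rpow,
      Real.rpow_two]
    ring
  calc ∫⁻ x in Ioo 0 (1 / t), ENNReal.ofReal (‖S.FT f x‖ * x * S.cden x)
      ≤ ∫⁻ x in Ioo 0 (1 / t),
          ENNReal.ofReal (K * t ^ γ / t ^ 2) * ENNReal.ofReal (x ^ (1 : ℝ) + x ^ (2 * S.α)) := by
        refine lintegral_mono_ae ?_
        filter_upwards [S.norm_FT_mul_cden_le hf ht hω] with x hx
        rw [← ENNReal.ofReal_mul (by positivity)]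
        exact ENNReal.ofReal_le_ofReal (by simpa only [K, mul_assoc] using hx)
    _ = ENNReal.ofReal
          (K * (t ^ ((γ - 3) - 1) / 2 + t ^ (γ - 2 * (S.α + 1) - 1) / (2 * S.α + 1))) := by
        rw [lintegral_const_mul' _ _ ENNReal.ofReal_ne_top,
          lintegral_Ioo_ofReal_rpow_add_rpow (by positivity) (by norm_num) (by linarith),
          ← ENNReal.ofReal_mul (by positivity)]
        congr 1
        rw [mul_add, mul_div_assoc', mul_div_assoc', hscale, hscale]
        ring_nf
    _ ≤ _ := by
        rw [mul_assoc K]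
        refine ENNReal.ofReal_le_ofReal (mul_le_mul_of_nonneg_left ?_ hK.le)
        have h₁ := Real.rpow_pos_of_pos ht ((γ - 3) - 1)
        have h₂ := Real.rpow_pos_of_pos ht (γ - 2 * (S.α + 1) - 1)
        have hd : 0 < 1 / (2 * S.α + 1) := by positivity
        rw [div_eq_mul_one_div (t ^ _) 2, div_eq_mul_one_div (t ^ _) (2 * S.α + 1)]
        nlinarith [mul_pos hd h₁]

/-- **Low-frequency estimate in the proof of Theorem 2 (iii)**: let `γ > 0` and let
`f` belong to the Besov-type space `B^{1,∞}_{γ,α}` on the Jacobi hypergroup (i.e.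
`f ∈ L¹_A(ℝ₊)` with `sup_{x>0} ω_{A,1}(f)(x)/x^γ < ∞`).  Then there is a constant
`c > 0` such that for all `t > 0`,
`∫₀^{1/t} |𝓕(f)(x)| x dx/|c(x)|² ≤ c ( t^((γ-3)-1) + t^(γ-2(α+1)-1) )`. -/
theorem theorem_two_iii_low (S : JacobiHypergroup) (γ : ℝ) (hγ : 0 < γ)
    (f : ℝ → ℂ) (hf : MemW S.A 1 f)
    (hBesov : ∃ C : ℝ, ∀ x > (0 : ℝ), S.omega 1 f x ≤ C * x ^ γ) :
    ∃ c > (0 : ℝ), ∀ t > (0 : ℝ),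
      ∫⁻ x in Set.Ioo (0 : ℝ) (1 / t),
          ENNReal.ofReal (‖S.FT f x‖ * x * S.cden x)
        ≤ ENNReal.ofReal (c * (t ^ ((γ - 3) - 1) + t ^ (γ - 2 * (S.α + 1) - 1))) :=
  theorem_two_iii_low_general S γ f hf hBesov
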